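/- In the Vasicek model, the explicit controls π*(x,y,r,t) := (2y/σ(t))·(λ + σ̄·B₁(t))·(A₂(t)/A₁(t))·e^{-B₁(t)·r} - x·(σ̄/σ(t))·B₁(t) and η* (t) := -λ - σ̄·B₁(t) form a pointwise saddle point of the Isaacs expression: for all x ∈ ℝ, y > 0, r ∈ ℝ, t ∈ [0,T], (i) Λ^{π*(x,y,r,t), η}(x,y,r,t) ≤ 0 for every η ∈ ℝ; (ii) Λ^{π, η*(t)}(x,y,r,t) ≥ 0 for every π ∈ ℝ; (iii) Λ^{π*(x,y,r,t), η*(t)}(x,y,r,t) = 0. -/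

import Mathlib

/-!
The candidate value function `V = H x + G y` is linear in the wealth variables, so the Isaacs
expression is a polynomial in the controls. Using the ODEs `B₁' = α B₁ - 1`, `A₁' = -A₁ f₁`,
`A₂' = -A₂ f₂` satisfied by the coefficients (`f₁`, `f₂` being the integrands in the exponents
of `A₁`, `A₂`), all control-free terms cancel and the expression factors as
`(λ + σ̄ B₁ + η) · (A₁ e^{B₁ r} (σ̄ B₁ x + π σ) + y A₂ (η - λ - σ̄ B₁))`.
The first factor vanishes at `η = η*`, and at `π = π*` the expression reduces to
`y A₂ (λ + σ̄ B₁ + η)²`, which is nonpositive because `A₂ < 0 < y`.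
-/

theorem hasDerivAt_inv_mul_one_sub_exp (α T t : ℝ) (hα : α ≠ 0) :
    HasDerivAt (fun u => 1 / α * (1 - Real.exp (-(α * (T - u)))))
      (α * (1 / α * (1 - Real.exp (-(α * (T - t))))) - 1) t := by
  have h : HasDerivAt (fun u => 1 / α * (1 - Real.exp (-(α * (T - u)))))
      (1 / α * -(Real.exp (-(α * (T - t))) * -(α * -1))) t :=
    ((((hasDerivAt_id t).const_sub T).const_mul α).neg.exp.const_sub 1).const_mul (1 / α)
  convert h using 1
  field_simp
  ring

theorem hasDerivAt_neg_exp_integral {f : ℝ → ℝ} (hf : Continuous f) (b t : ℝ) :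
    HasDerivAt (fun u => -Real.exp (∫ s in u..b, f s))
      (-(-Real.exp (∫ s in t..b, f s)) * f t) t := by
  have h : HasDerivAt (fun u => -Real.exp (∫ s in u..b, f s)) _ t :=
    (intervalIntegral.integral_hasDerivAt_left (hf.intervalIntegrable t b)
      hf.aestronglyMeasurable.stronglyMeasurableAtFilter hf.continuousAt).exp.neg
  convert h using 1
  ring

theorem deriv_const_mul_exp_mul (a b p : ℝ) :
    deriv (fun q => a * Real.exp (b * q)) p = a * b * Real.exp (b * p) := by
  have h : HasDerivAt (fun q => a * Real.exp (b * q)) _ p :=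
    ((hasDerivAt_id p).const_mul b).exp.const_mul a
  rw [h.deriv]
  simp only [id, mul_one]
  ring

noncomputable def isaacsExpr (α lam θ σb : ℝ) (σ : ℝ → ℝ) (H G : ℝ → ℝ → ℝ) (π η x y r t : ℝ) : ℝ :=
  x * deriv (fun s => H r s) t + y * deriv (fun s => G r s) t
    + (π * σ t * (lam + η) + r * x) * H r t + η ^ 2 * y * G r t
    + (θ - α * r + σb * η) *
        (x * deriv (fun p => H p t) r + y * deriv (fun p => G p t) r)
    + (1 / 2) * σb ^ 2 *
        (x * deriv (fun p => deriv (fun q => H q t) p) r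
          + y * deriv (fun p => deriv (fun q => G q t) p) r)
    + π * σ t * σb * deriv (fun p => H p t) r
    + η * σb * y * deriv (fun p => G p t) r

theorem isaacsExpr_eq_mul {α lam θ σb : ℝ} {σ B1 A1 A2 : ℝ → ℝ} {H G : ℝ → ℝ → ℝ}
    (hB1 : ∀ t, HasDerivAt B1 (α * B1 t - 1) t)
    (hA1 : ∀ t, HasDerivAt A1
      (-A1 t * ((θ - σb * lam) * B1 t - (1 / 2) * σb ^ 2 * B1 t ^ 2)) t)
    (hA2 : ∀ t, HasDerivAt A2 (-A2 t * (lam + σb * B1 t) ^ 2) t)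
    (hH : ∀ r t, H r t = A1 t * Real.exp (B1 t * r)) (hG : ∀ r t, G r t = A2 t)
    (π η x y r t : ℝ) :
    isaacsExpr α lam θ σb σ H G π η x y r t =
      (lam + σb * B1 t + η) *
        (A1 t * Real.exp (B1 t * r) * (σb * B1 t * x + π * σ t)
          + y * A2 t * (η - lam - σb * B1 t)) := by
  obtain rfl : H = fun r t => A1 t * Real.exp (B1 t * r) := funext fun r => funext (hH r)
  obtain rfl : G = fun _ t => A2 t := funext fun r => funext (hG r)
  have hHt : HasDerivAt (fun s => A1 s * Real.exp (B1 s * r)) _ t :=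
    (hA1 t).mul ((hB1 t).mul_const r).exp
  simp only [isaacsExpr, hHt.deriv, (hA2 t).deriv, deriv_const_mul_exp_mul, deriv_const']
  ring

theorem stmt_17_general
    (T : ℝ)
    (α lam θ σb : ℝ) (hα : 0 < α)
    (σ : ℝ → ℝ) (hσpos : ∀ t, 0 < σ t)
    (B1 A1 A2 : ℝ → ℝ)
    (hB1 : ∀ t : ℝ, B1 t = (1 / α) * (1 - Real.exp (-(α * (T - t)))))
    (hA1 : ∀ t : ℝ, A1 t =
      -Real.exp (∫ s in t..T, ((θ - σb * lam) * B1 s - (1 / 2) * σb ^ 2 * (B1 s) ^ 2)))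
    (hA2 : ∀ t : ℝ, A2 t = -Real.exp (∫ s in t..T, (lam + σb * B1 s) ^ 2))
    (H G : ℝ → ℝ → ℝ)
    (hH : ∀ r t : ℝ, H r t = A1 t * Real.exp (B1 t * r))
    (hG : ∀ r t : ℝ, G r t = A2 t)
    (Lam : ℝ → ℝ → ℝ → ℝ → ℝ → ℝ → ℝ)
    (hLam : ∀ π η x y r t : ℝ, Lam π η x y r t =
      x * deriv (fun s => H r s) t + y * deriv (fun s => G r s) t
        + (π * σ t * (lam + η) + r * x) * H r t + η ^ 2 * y * G r t
        + (θ - α * r + σb * η) *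
            (x * deriv (fun p => H p t) r + y * deriv (fun p => G p t) r)
        + (1 / 2) * σb ^ 2 *
            (x * deriv (fun p => deriv (fun q => H q t) p) r
              + y * deriv (fun p => deriv (fun q => G q t) p) r)
        + π * σ t * σb * deriv (fun p => H p t) r
        + η * σb * y * deriv (fun p => G p t) r)
    (pistar : ℝ → ℝ → ℝ → ℝ → ℝ)
    (hpistar : ∀ x y r t : ℝ, pistar x y r t =
      (2 * y / σ t) * (lam + σb * B1 t) * (A2 t / A1 t) * Real.exp (-(B1 t * r))
        - x * (σb / σ t) * B1 t)
    (etastar : ℝ → ℝ)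
    (hetastar : ∀ t : ℝ, etastar t = -lam - σb * B1 t) :
    ∀ x y r : ℝ, 0 < y → ∀ t ∈ Set.Icc (0 : ℝ) T,
      (∀ η : ℝ, Lam (pistar x y r t) η x y r t ≤ 0) ∧
      (∀ π : ℝ, 0 ≤ Lam π (etastar t) x y r t) ∧
      Lam (pistar x y r t) (etastar t) x y r t = 0 := by
  intro x y r hy t _
  have hB1' : ∀ t, HasDerivAt B1 (α * B1 t - 1) t := by
    intro t
    have h := hasDerivAt_inv_mul_one_sub_exp α T t hα.ne'
    rwa [← funext hB1, ← hB1] at h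
  have hB1c : Continuous B1 := continuous_iff_continuousAt.2 fun t => (hB1' t).continuousAt
  have hA1' : ∀ t, HasDerivAt A1
      (-A1 t * ((θ - σb * lam) * B1 t - (1 / 2) * σb ^ 2 * B1 t ^ 2)) t := by
    rw [funext hA1]
    exact hasDerivAt_neg_exp_integral (by fun_prop) T
  have hA2' : ∀ t, HasDerivAt A2 (-A2 t * (lam + σb * B1 t) ^ 2) t := by
    rw [funext hA2]
    exact hasDerivAt_neg_exp_integral (by fun_prop) T
  have key (π η : ℝ) :=
    (hLam π η x y r t).trans (isaacsExpr_eq_mul hB1' hA1' hA2' hH hG π η x y r t)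
  have hA1t : A1 t ≠ 0 := by rw [hA1]; exact neg_ne_zero.2 (Real.exp_pos _).ne'
  have hA2t : A2 t < 0 := by rw [hA2]; exact neg_neg_of_pos (Real.exp_pos _)
  have at_pistar (η : ℝ) :
      Lam (pistar x y r t) η x y r t = y * A2 t * (lam + σb * B1 t + η) ^ 2 := by
    have hπσ : A1 t * Real.exp (B1 t * r) * (σb * B1 t * x + pistar x y r t * σ t)
        = 2 * y * (lam + σb * B1 t) * A2 t := by
      rw [hpistar, Real.exp_neg]
      field_simp [(hσpos t).ne', hA1t]
      ring
    rw [key, hπσ]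
    ring
  have at_etastar (π : ℝ) : Lam π (etastar t) x y r t = 0 := by
    rw [key, hetastar]; ring
  refine ⟨fun η => ?_, fun π => (at_etastar π).ge, at_etastar _⟩
  rw [at_pistar]
  exact mul_nonpos_of_nonpos_of_nonneg (mul_neg_of_pos_of_neg hy hA2t).le (sq_nonneg _)

theorem stmt_17
    (T : ℝ) (hT : 0 < T)
    (α lam θ σb : ℝ) (hα : 0 < α)
    (σ : ℝ → ℝ) (hσcont : Continuous σ) (hσpos : ∀ t, 0 < σ t)
    (B1 A1 A2 : ℝ → ℝ)
    (hB1 : ∀ t : ℝ, B1 t = (1 / α) * (1 - Real.exp (-(α * (T - t)))))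
    (hA1 : ∀ t : ℝ, A1 t =
      -Real.exp (∫ s in t..T, ((θ - σb * lam) * B1 s - (1 / 2) * σb ^ 2 * (B1 s) ^ 2)))
    (hA2 : ∀ t : ℝ, A2 t = -Real.exp (∫ s in t..T, (lam + σb * B1 s) ^ 2))
    (H G : ℝ → ℝ → ℝ)
    (hH : ∀ r t : ℝ, H r t = A1 t * Real.exp (B1 t * r))
    (hG : ∀ r t : ℝ, G r t = A2 t)
    (Lam : ℝ → ℝ → ℝ → ℝ → ℝ → ℝ → ℝ)
    (hLam : ∀ π η x y r t : ℝ, Lam π η x y r t =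
      x * deriv (fun s => H r s) t + y * deriv (fun s => G r s) t
        + (π * σ t * (lam + η) + r * x) * H r t + η ^ 2 * y * G r t
        + (θ - α * r + σb * η) *
            (x * deriv (fun p => H p t) r + y * deriv (fun p => G p t) r)
        + (1 / 2) * σb ^ 2 *
            (x * deriv (fun p => deriv (fun q => H q t) p) r
              + y * deriv (fun p => deriv (fun q => G q t) p) r)
        + π * σ t * σb * deriv (fun p => H p t) r
        + η * σb * y * deriv (fun p => G p t) r)
    (pistar : ℝ → ℝ → ℝ → ℝ → ℝ)
    (hpistar : ∀ x y r t : ℝ, pistar x y r t =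
      (2 * y / σ t) * (lam + σb * B1 t) * (A2 t / A1 t) * Real.exp (-(B1 t * r))
        - x * (σb / σ t) * B1 t)
    (etastar : ℝ → ℝ)
    (hetastar : ∀ t : ℝ, etastar t = -lam - σb * B1 t) :
    ∀ x y r : ℝ, 0 < y → ∀ t ∈ Set.Icc (0 : ℝ) T,
      (∀ η : ℝ, Lam (pistar x y r t) η x y r t ≤ 0) ∧
      (∀ π : ℝ, 0 ≤ Lam π (etastar t) x y r t) ∧
      Lam (pistar x y r t) (etastar t) x y r t = 0 :=
  stmt_17_general T α lam θ σb hα σ hσpos B1 A1 A2 hB1 hA1 hA2 H G hH hG Lam hLam pistar hpistar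
    etastar hetastar
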